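/- arXiv:math/0104124 — 9 statements merged into one kernel-verified Lean document; each statement's English description precedes it below -/
import Mathlib

section
/- Let U ⊆ ℂᵐ be an open set and let w₁, …, w_m : U → ℂ be functions that are continuously differentiable as maps of real variables (i.e. ℝ-Fréchet differentiable with continuous derivative, identifying ℂᵐ with ℝ^{2m}). Suppose that for every point p ∈ U and every direction a ∈ ℂᵐ, the function ξ ↦ ∑_{j=1}^{m} w_j(p + ξ·a) · a_j, defined on the open set {ξ ∈ ℂ : p + ξ·a ∈ U}, is complex differentiable. Then each w_j is complex differentiable (holomorphic) on U. -/
/-!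
At a point `p`, let `Dⱼ` be the real derivative of `wⱼ`. Holomorphy of
`ξ ↦ ∑ⱼ wⱼ (p + ξ a) aⱼ` at `ξ = 0` says that the form `β a b = ∑ⱼ aⱼ Dⱼ b`, which is complex
linear in `a`, satisfies `β a (I a) = I β a a`. Polarizing at `a + b` and `a + I b` upgrades this
to `β a (I b) = I β a b`, and `a = eₖ` gives the Cauchy–Riemann equations `Dₖ (I b) = I Dₖ b`.
-/

open Complex

theorem map_I_smul_of_map_I_smul_self {V M : Type*} [AddCommGroup V] [Module ℂ V]
    [AddCommGroup M] [Module ℂ M] (β : V →ₗ[ℂ] V →+ M) (h : ∀ a, β a (I • a) = I • β a a)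
    (a b : V) : β a (I • b) = I • β a b := by
  have hsum := h (a + b)
  have hsumI := h (a + I • b)
  simp only [map_add, smul_add, AddMonoidHom.add_apply, map_smul, AddMonoidHom.smul_apply,
    smul_smul, I_mul_I, neg_one_smul, map_neg, h a, h b] at hsum hsumI
  linear_combination (norm := module) (1/2 : ℂ) • hsum + (I/2) • hsumI
    + I_sq • ((1/2 : ℂ) • β a (I • b)) - I_sq • ((1/2 : ℂ) • β b (I • a))

section

variable {V E : Type*} [NormedAddCommGroup V] [NormedSpace ℂ V]
  [NormedAddCommGroup E] [NormedSpace ℂ E]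

theorem ContinuousLinearMap.map_smul_of_map_I_smul (D : V →L[ℝ] E)
    (hD : ∀ v, D (I • v) = I • D v) (c : ℂ) (v : V) : D (c • v) = c • D v := by
  let ℓ : ℂ →ₗ[ℝ] E := D.toLinearMap ∘ₗ (LinearMap.toSpanSingleton ℂ V v).restrictScalars ℝ
  simpa [ℓ] using real_linearMap_map_smul_complex (ℓ := ℓ) (by simpa [ℓ] using hD v) c 1

theorem HasFDerivAt.differentiableAt_of_map_I_smul {f : V → E} {D : V →L[ℝ] E} {x : V}
    (hf : HasFDerivAt f D x) (hD : ∀ v, D (I • v) = I • D v) : DifferentiableAt ℂ f x :=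
  (hasFDerivAt_of_restrictScalars ℝ (f' := { D with map_smul' := D.map_smul_of_map_I_smul hD })
    hf rfl).differentiableAt

theorem HasFDerivAt.map_I_smul_of_differentiableAt_line {f : V → E} {D : V →L[ℝ] E} {x a : V}
    (hf : HasFDerivAt f D x) (hline : DifferentiableAt ℂ (fun ξ : ℂ => f (x + ξ • a)) 0) :
    D (I • a) = I • D a := by
  let L := fderiv ℂ (fun ξ : ℂ => f (x + ξ • a)) 0
  have hL : HasFDerivAt (fun ξ : ℂ => f (x + ξ • a)) (L.restrictScalars ℝ) 0 :=
    hline.hasFDerivAt.restrictScalars ℝ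
  have hchain : HasFDerivAt (fun ξ : ℂ => f (x + ξ • a))
      (D.comp ((ContinuousLinearMap.toSpanSingleton ℂ a).restrictScalars ℝ)) 0 := by
    have hlin : HasFDerivAt (fun ξ : ℂ => x + ξ • a)
        ((ContinuousLinearMap.toSpanSingleton ℂ a).restrictScalars ℝ) 0 :=
      ((ContinuousLinearMap.toSpanSingleton ℂ a).hasFDerivAt.restrictScalars ℝ).const_add x
    exact (by simpa using hf : HasFDerivAt f D (x + (0 : ℂ) • a)).comp 0 hlin
  have heq := congrArg (fun T : ℂ →L[ℝ] E => (T I, T 1)) (hL.unique hchain)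
  simp only [ContinuousLinearMap.coe_restrictScalars', ContinuousLinearMap.coe_comp,
    Function.comp_apply, ContinuousLinearMap.toSpanSingleton_apply, one_smul, Prod.mk.injEq] at heq
  rw [← heq.1, ← heq.2, ← L.map_smul, smul_eq_mul, mul_one]

end

/-- A `(1,0)`-form `ω = ∑ⱼ wⱼ dzⱼ` with `C¹` (over `ℝ`) coefficients on an open set
`U ⊆ ℂᵐ`, whose restriction to every complex line is holomorphic, has holomorphic
coefficients. -/
theorem holomorphic_of_holomorphic_on_lines
    (m : ℕ) (U : Set (Fin m → ℂ)) (hU : IsOpen U)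
    (w : Fin m → (Fin m → ℂ) → ℂ)
    (hw : ∀ j, ContDiffOn ℝ 1 (w j) U)
    (hline : ∀ p ∈ U, ∀ a : Fin m → ℂ,
      DifferentiableOn ℂ (fun ξ : ℂ => ∑ j, w j (p + ξ • a) * a j)
        {ξ : ℂ | p + ξ • a ∈ U}) :
    ∀ j, DifferentiableOn ℂ (w j) U := by
  intro k p hp
  set D := fun j => fderiv ℝ (w j) p
  have hD : ∀ j, HasFDerivAt (w j) (D j) p := fun j =>
    ((hw j).differentiableOn one_ne_zero |>.differentiableAt (hU.mem_nhds hp)).hasFDerivAt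
  let β : (Fin m → ℂ) →ₗ[ℂ] (Fin m → ℂ) →+ ℂ :=
    Fintype.linearCombination ℂ fun j => (D j : (Fin m → ℂ) →+ ℂ)
  have hβ : ∀ a, β a (I • a) = I • β a a := by
    intro a
    have hline_at : DifferentiableAt ℂ (fun ξ : ℂ => ∑ j, w j (p + ξ • a) * a j) 0 :=
      (hline p hp a).differentiableAt <|
        (hU.preimage (by fun_prop)).mem_nhds (by simpa using hp)
    simpa [β, Fintype.linearCombination_apply] using
      (HasFDerivAt.fun_sum fun j _ => (hD j).mul_const (a j)).map_I_smul_of_differentiableAt_line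
        hline_at
  have hDk : ∀ v, D k (I • v) = I • D k v := fun v => by
    simpa [β, Fintype.linearCombination_apply, Pi.single_apply] using
      map_I_smul_of_map_I_smul_self β hβ (Pi.single k 1) v
  exact ((hD k).differentiableAt_of_map_I_smul hDk).differentiableWithinAt
end

section
/- Let U ⊆ ℂᵐ be an open set and let ω₁, …, ω_m : U → ℂ be holomorphic functions. Suppose there exists a real-differentiable function h : U → ℝ such that for every z ∈ U and every v ∈ ℂᵐ the real differential of h satisfies Dh(z)(v) = Re(∑_{j=1}^{m} ω_j(z) · v_j). Then for all j, k and all z ∈ U one has ∂ω_j/∂z_k (z) = ∂ω_k/∂z_j (z), i.e. the holomorphic 1-form ∑_j ω_j dz_j is closed. -/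
/-!
The real derivative of `h` is `y ↦ Re ∘ ω(y)`, where `ω(y) = ∑ⱼ ωⱼ(y) dzⱼ`. Since `ω` is
holomorphic, `h` is twice differentiable with second derivative `(u, v) ↦ Re (dω(u) v)`, which is
symmetric by Schwarz's theorem. Applying this also to `(I • u, v)` and using the complex linearity
of `dω` recovers the imaginary parts, so `dω(u) v = dω(v) u`.
-/

open Complex ContinuousLinearMap Filter Topology

section RealPart

variable {E : Type*} [NormedAddCommGroup E] [NormedSpace ℂ E]

variable (E) in
noncomputable def realPartCLM : (E →L[ℂ] ℂ) →L[ℝ] E →L[ℝ] ℝ :=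
  (compL ℝ E ℂ ℝ reCLM).comp (restrictScalarsL ℂ E ℂ ℝ ℝ)

@[simp]
theorem realPartCLM_apply (φ : E →L[ℂ] ℂ) (v : E) : realPartCLM E φ v = (φ v).re := rfl

theorem fderiv_apply_comm_of_hasFDerivAt_realPart {ω : E → E →L[ℂ] ℂ} {h : E → ℝ} {z : E}
    (hω : DifferentiableAt ℂ ω z)
    (hh : ∀ᶠ y in 𝓝 z, HasFDerivAt h (realPartCLM E (ω y)) y) (u v : E) :
    fderiv ℂ ω z u v = fderiv ℂ ω z v u := by
  have hsymm : ∀ u v, (fderiv ℂ ω z u v).re = (fderiv ℂ ω z v u).re :=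
    second_derivative_symmetric_of_eventually hh
      ((realPartCLM E).hasFDerivAt.comp z (hω.hasFDerivAt.restrictScalars ℝ))
  exact Complex.ext (hsymm u v) (by simpa using hsymm (I • u) v)

end RealPart

section CoordOneForm

variable {ι : Type*} [Fintype ι]

noncomputable def coordOneForm (ω : ι → (ι → ℂ) → ℂ) (w : ι → ℂ) : (ι → ℂ) →L[ℂ] ℂ :=
  ∑ l, ω l w • proj l

@[simp]
theorem coordOneForm_apply (ω : ι → (ι → ℂ) → ℂ) (w v : ι → ℂ) :
    coordOneForm ω w v = ∑ l, ω l w * v l := by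
  simp [coordOneForm]

theorem hasFDerivAt_coordOneForm {ω : ι → (ι → ℂ) → ℂ} {z : ι → ℂ}
    (hω : ∀ l, DifferentiableAt ℂ (ω l) z) :
    HasFDerivAt (coordOneForm ω) (∑ l, (fderiv ℂ (ω l) z).smulRight (proj l)) z := by
  unfold coordOneForm
  exact HasFDerivAt.fun_sum fun l _ =>
    (hω l).hasFDerivAt.smul_const (proj l : (ι → ℂ) →L[ℂ] ℂ)

theorem fderiv_coordOneForm_single [DecidableEq ι] {ω : ι → (ι → ℂ) → ℂ} {z : ι → ℂ}
    (hω : ∀ l, DifferentiableAt ℂ (ω l) z) (j k : ι) :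
    fderiv ℂ (coordOneForm ω) z (Pi.single k 1) (Pi.single j 1) =
      fderiv ℂ (ω j) z (Pi.single k 1) := by
  simp [(hasFDerivAt_coordOneForm hω).fderiv, Pi.single_apply]

end CoordOneForm

/-- A holomorphic `(1,0)`-form `∑ⱼ ωⱼ dzⱼ` on an open set `U ⊆ ℂᵐ` whose real part is
exact (equal to `dh` for a real-differentiable function `h : U → ℝ`) is closed:
`∂ωⱼ/∂z_k = ∂ω_k/∂zⱼ` on `U`. -/
theorem closed_of_realPart_exact
    (m : ℕ) (U : Set (Fin m → ℂ)) (hU : IsOpen U)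
    (ω : Fin m → (Fin m → ℂ) → ℂ)
    (hω : ∀ j, DifferentiableOn ℂ (ω j) U)
    (h : (Fin m → ℂ) → ℝ)
    (D : (Fin m → ℂ) → ((Fin m → ℂ) →L[ℝ] ℝ))
    (hD : ∀ z ∈ U, HasFDerivAt h (D z) z)
    (hDval : ∀ z ∈ U, ∀ v : Fin m → ℂ, D z v = (∑ j, ω j z * v j).re) :
    ∀ j k, ∀ z ∈ U,
      fderiv ℂ (ω j) z (Pi.single k 1) = fderiv ℂ (ω k) z (Pi.single j 1) := by
  intro j k z hz
  have hdiff : ∀ l, DifferentiableAt ℂ (ω l) z := fun l =>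
    (hω l).differentiableAt (hU.mem_nhds hz)
  have hexact : ∀ᶠ y in 𝓝 z, HasFDerivAt h (realPartCLM _ (coordOneForm ω y)) y := by
    filter_upwards [hU.mem_nhds hz] with y hy
    exact (hD y hy).congr_fderiv (by ext v; simp [hDval y hy v])
  rw [← fderiv_coordOneForm_single hdiff, ← fderiv_coordOneForm_single hdiff]
  exact fderiv_apply_comm_of_hasFDerivAt_realPart
    (hasFDerivAt_coordOneForm hdiff).differentiableAt hexact _ _
end

section
/- Let U ⊆ ℂᵐ be open, let F : U → ℂⁿ be holomorphic, and suppose F satisfies the conformality condition. Let f = Re ∘ F : U → ℝⁿ. Then for every z ∈ U, the real differential of f at z (the map v ↦ Re(DF(z)(v)) from ℂᵐ ≅ ℝ^{2m} to ℝⁿ, taking real parts componentwise) is injective if and only if the complex derivative DF(z) : ℂᵐ → ℂⁿ is injective. -/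
/-- For a holomorphic map `F : U → ℂⁿ` satisfying the conformality condition
`∑ᵢ ωᵢ ⊗ ωᵢ = 0`, the real differential of `f = Re ∘ F` at a point is injective
iff the complex derivative `DF(z)` is injective. -/
theorem realDifferential_injective_iff_complexDerivative_injective
    (m n : ℕ) (U : Set (Fin m → ℂ)) (hU : IsOpen U)
    (F : (Fin m → ℂ) → (Fin n → ℂ))
    (hF : DifferentiableOn ℂ F U)
    (hconf : ∀ z ∈ U, ∀ v w : Fin m → ℂ,
      ∑ i, fderiv ℂ F z v i * fderiv ℂ F z w i = 0) :
    ∀ z ∈ U,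
      (Function.Injective fun v : Fin m → ℂ => fun i => (fderiv ℂ F z v i).re) ↔
        Function.Injective (fderiv ℂ F z) := by
  intro z hz
  constructor
  · intro h u v huv
    exact h (by simp [huv])
  · intro h u v huv
    apply h
    set c : Fin n → ℂ := fun i => fderiv ℂ F z (u - v) i with hc_def
    have hre : ∀ i, (c i).re = 0 := by
      intro i
      have h1 := congrFun huv i
      simp only [hc_def, map_sub, Pi.sub_apply, Complex.sub_re]
      dsimp at h1
      rw [h1]; ring
    have hc := hconf z hz (u - v) (u - v)
    have hre_sum : (∑ i, c i * c i).re = 0 := by rw [hc]; rfl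
    rw [Complex.re_sum] at hre_sum
    have him : ∀ i, (c i).im = 0 := by
      have heach : ∀ i ∈ Finset.univ, (c i * c i).re = -((c i).im ^ 2) := by
        intro i _
        rw [Complex.mul_re, hre i]; ring
      rw [Finset.sum_congr rfl heach, Finset.sum_neg_distrib] at hre_sum
      have hz2 : ∑ i, (c i).im ^ 2 = 0 := by linarith
      intro i
      have := (Finset.sum_eq_zero_iff_of_nonneg (fun j _ => sq_nonneg ((c j).im))).mp
        hz2 i (Finset.mem_univ i)
      exact pow_eq_zero_iff (by norm_num) |>.mp this
    have hczero : fderiv ℂ F z (u - v) = 0 := by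
      funext i
      exact Complex.ext (hre i) (him i)
    have h2 : fderiv ℂ F z u - fderiv ℂ F z v = 0 := by
      rw [← map_sub]; exact hczero
    exact sub_eq_zero.mp h2
end

section
/- Let U ⊆ ℂᵐ be open, let F : U → ℂⁿ be holomorphic satisfying the conformality condition, and let f = Re ∘ F : U → ℝⁿ, with real differential df(z)(v) = Re(DF(z)(v)). Then the pullback of the Euclidean metric by f is invariant under the complex structure: for every z ∈ U and all v, w ∈ ℂᵐ, ⟨df(z)(i·v), df(z)(i·w)⟩ = ⟨df(z)(v), df(z)(w)⟩. -/
/-!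
Write `a = DF(z) v` and `b = DF(z) w`. Since `DF(z)` is `ℂ`-linear, `df(z)(i·v) = Re (i a) = -Im a`,
so the claim is `∑ Im aᵢ Im bᵢ = ∑ Re aᵢ Re bᵢ`, which is the real part of `∑ aᵢ bᵢ = 0`.
-/

open Complex

theorem sum_re_mul_re_eq_sum_im_mul_im {ι : Type*} [Fintype ι] {a b : ι → ℂ}
    (h : ∑ i, a i * b i = 0) : ∑ i, (a i).re * (b i).re = ∑ i, (a i).im * (b i).im := by
  have hre := congrArg re h
  rwa [re_sum, zero_re, Finset.sum_congr rfl fun i _ => mul_re (a i) (b i),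
    Finset.sum_sub_distrib, sub_eq_zero] at hre

theorem inner_eq_sum_re_mul_re {ι : Type*} [Fintype ι] {x y : EuclideanSpace ℝ ι} {a b : ι → ℂ}
    (hx : x.ofLp = fun i => (a i).re) (hy : y.ofLp = fun i => (b i).re) :
    inner ℝ x y = ∑ i, (a i).re * (b i).re := by
  simp only [PiLp.inner_apply, RCLike.inner_apply, conj_trivial, hx, hy]
  exact Finset.sum_congr rfl fun i _ => mul_comm _ _

theorem pullback_metric_J_invariant_general
    (m n : ℕ) (U : Set (Fin m → ℂ))
    (F : (Fin m → ℂ) → (Fin n → ℂ))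
    (hconf : ∀ z ∈ U, ∀ v w : Fin m → ℂ,
      ∑ i, fderiv ℂ F z v i * fderiv ℂ F z w i = 0)
    (df : (Fin m → ℂ) → (Fin m → ℂ) → EuclideanSpace ℝ (Fin n))
    (hdf : ∀ z v, df z v = fun i => (fderiv ℂ F z v i).re) :
    ∀ z ∈ U, ∀ v w : Fin m → ℂ,
      @inner ℝ (EuclideanSpace ℝ (Fin n)) _ (df z (Complex.I • v)) (df z (Complex.I • w)) =
        @inner ℝ (EuclideanSpace ℝ (Fin n)) _ (df z v) (df z w) := by
  intro z hz v w
  have hI : ∀ u, fderiv ℂ F z (I • u) = I • fderiv ℂ F z u := (fderiv ℂ F z).map_smul I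
  rw [inner_eq_sum_re_mul_re (hdf z _) (hdf z _), inner_eq_sum_re_mul_re (hdf z v) (hdf z w),
    sum_re_mul_re_eq_sum_im_mul_im (hconf z hz v w)]
  simp only [hI, Pi.smul_apply, smul_eq_mul, I_mul_re, neg_mul_neg]

/-- For a holomorphic `F : U → ℂⁿ` satisfying the conformality condition, the
pullback of the euclidean metric by `f = Re ∘ F` is invariant under the complex
structure: `⟨df(z)(i·v), df(z)(i·w)⟩ = ⟨df(z)(v), df(z)(w)⟩`. -/
theorem pullback_metric_J_invariant
    (m n : ℕ) (U : Set (Fin m → ℂ)) (hU : IsOpen U)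
    (F : (Fin m → ℂ) → (Fin n → ℂ)) (hF : DifferentiableOn ℂ F U)
    (hconf : ∀ z ∈ U, ∀ v w : Fin m → ℂ,
      ∑ i, fderiv ℂ F z v i * fderiv ℂ F z w i = 0)
    (df : (Fin m → ℂ) → (Fin m → ℂ) → EuclideanSpace ℝ (Fin n))
    (hdf : ∀ z v, df z v = fun i => (fderiv ℂ F z v i).re) :
    ∀ z ∈ U, ∀ v w : Fin m → ℂ,
      @inner ℝ (EuclideanSpace ℝ (Fin n)) _ (df z (Complex.I • v)) (df z (Complex.I • w)) =
        @inner ℝ (EuclideanSpace ℝ (Fin n)) _ (df z v) (df z w) :=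
  pullback_metric_J_invariant_general m n U F hconf df hdf
end

section
/- Let U ⊆ ℂᵐ be open, let F : U → ℂⁿ be holomorphic satisfying the conformality condition, and let f = Re ∘ F : U → ℝⁿ, with real differential df(z)(v) = Re(DF(z)(v)). Then the pullback metric has the expression: for every z ∈ U and all v, w ∈ ℂᵐ, ⟨df(z)(v), df(z)(w)⟩ = (1/2) · Re(∑_{i=1}^{n} ω_i(z)(v) · conj(ω_i(z)(w))). -/
open ComplexConjugate

theorem Complex.re_mul_re_eq (a b : ℂ) : a.re * b.re = ((a * conj b).re + (a * b).re) / 2 := by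
  simp only [Complex.mul_re, Complex.conj_re, Complex.conj_im]
  ring

theorem Complex.sum_re_mul_re_of_sum_mul_eq_zero {ι : Type*} (s : Finset ι) (a b : ι → ℂ)
    (h : ∑ i ∈ s, a i * b i = 0) :
    ∑ i ∈ s, (a i).re * (b i).re = 1 / 2 * (∑ i ∈ s, a i * conj (b i)).re := by
  have h_re : ∑ i ∈ s, (a i * b i).re = 0 := by rw [← Complex.re_sum, h, Complex.zero_re]
  simp only [Complex.re_mul_re_eq, ← Finset.sum_div, Finset.sum_add_distrib, h_re, Complex.re_sum]
  ring

theorem pullback_metric_eq_half_re_hermitian_general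
    (m n : ℕ) (U : Set (Fin m → ℂ))
    (F : (Fin m → ℂ) → (Fin n → ℂ))
    (hconf : ∀ z ∈ U, ∀ v w : Fin m → ℂ,
      ∑ i, fderiv ℂ F z v i * fderiv ℂ F z w i = 0)
    (df : (Fin m → ℂ) → (Fin m → ℂ) → EuclideanSpace ℝ (Fin n))
    (hdf : ∀ z v, df z v = fun i => (fderiv ℂ F z v i).re) :
    ∀ z ∈ U, ∀ v w : Fin m → ℂ,
      @inner ℝ (EuclideanSpace ℝ (Fin n)) _ (df z v) (df z w) =
        (1 / 2) * (∑ i, fderiv ℂ F z v i * (starRingEnd ℂ) (fderiv ℂ F z w i)).re := by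
  intro z hz v w
  rw [← Complex.sum_re_mul_re_of_sum_mul_eq_zero _ _ _ (hconf z hz v w), real_inner_comm,
    PiLp.inner_apply]
  simp only [hdf, RCLike.inner_apply, conj_trivial]

/-- For a holomorphic `F : U → ℂⁿ` satisfying the conformality condition, the
pullback metric of `f = Re ∘ F` is given by
`⟨df(z)(v), df(z)(w)⟩ = (1/2)·Re(∑ᵢ ωᵢ(z)(v)·conj(ωᵢ(z)(w)))`. -/
theorem pullback_metric_eq_half_re_hermitian
    (m n : ℕ) (U : Set (Fin m → ℂ)) (hU : IsOpen U)
    (F : (Fin m → ℂ) → (Fin n → ℂ)) (hF : DifferentiableOn ℂ F U)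
    (hconf : ∀ z ∈ U, ∀ v w : Fin m → ℂ,
      ∑ i, fderiv ℂ F z v i * fderiv ℂ F z w i = 0)
    (df : (Fin m → ℂ) → (Fin m → ℂ) → EuclideanSpace ℝ (Fin n))
    (hdf : ∀ z v, df z v = fun i => (fderiv ℂ F z v i).re) :
    ∀ z ∈ U, ∀ v w : Fin m → ℂ,
      @inner ℝ (EuclideanSpace ℝ (Fin n)) _ (df z v) (df z w) =
        (1 / 2) * (∑ i, fderiv ℂ F z v i * (starRingEnd ℂ) (fderiv ℂ F z w i)).re :=
  pullback_metric_eq_half_re_hermitian_general m n U F hconf df hdf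
end

section
/- Let U ⊆ ℂᵐ be open, let F : U → ℂⁿ be holomorphic satisfying the conformality condition, and let f = Re ∘ F : U → ℝⁿ, with real differential df(z)(v) = Re(DF(z)(v)). Define the fundamental 2-form α by α(z)(v, w) = ⟨df(z)(i·v), df(z)(w)⟩ for z ∈ U, v, w ∈ ℂᵐ. Then α is closed: for every z ∈ U and all u, v, w ∈ ℂᵐ, D_u[α(·)(v,w)](z) + D_v[α(·)(w,u)](z) + D_w[α(·)(u,v)](z) = 0, where D_u[α(·)(v,w)](z) denotes the directional derivative at z in direction u of the real-valued function z' ↦ α(z')(v,w). -/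
/-!
Since `F` is holomorphic in several variables, the Cauchy integral formula with a parameter shows
that `DF` is again holomorphic, so the second derivative `D²F` exists and is symmetric.
Differentiating the conformality condition `⟪DF a, DF b⟫ = 0` (complex bilinear dot product) shows
that `S(a, b, c) = ⟪D²F(a, b), DF c⟫` is antisymmetric in `b, c`; being also symmetric in `a, b`,
it vanishes. Writing `α(v, w) = ⟪Re (i DF v), Re (DF w)⟫` and differentiating, the terms of the
cyclic sum of `dα` pair up into `-Im S(u, v, w) - Im S(v, w, u) - Im S(w, u, v) = 0`.
-/

open Complex Metric Filter Topology Real MeasureTheory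

theorem differentiableAt_clm_of_forall_apply {𝕜 D E V : Type*} [NontriviallyNormedField 𝕜]
    [CompleteSpace 𝕜] [NormedAddCommGroup D] [NormedSpace 𝕜 D] [NormedAddCommGroup E]
    [NormedSpace 𝕜 E] [FiniteDimensional 𝕜 E] [NormedAddCommGroup V] [NormedSpace 𝕜 V]
    {f : D → E →L[𝕜] V} {x : D} (hf : ∀ y, DifferentiableAt 𝕜 (fun x => f x y) x) :
    DifferentiableAt 𝕜 f x := by
  let e₁ :=
    ContinuousLinearEquiv.ofFinrankEq (Module.finrank_fin_fun 𝕜 (n := Module.finrank 𝕜 E)).symm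
  let e₂ := (e₁.arrowCongr (1 : V ≃L[𝕜] V)).trans (ContinuousLinearEquiv.piRing (Fin _))
  rw [← Function.id_comp f, ← e₂.symm_comp_self]
  exact e₂.symm.differentiableAt.comp x (differentiableAt_pi.2 fun i => hf _)

section LineRestriction

variable {𝕜 E V : Type*} [NontriviallyNormedField 𝕜] [NormedAddCommGroup E] [NormedSpace 𝕜 E]
  [NormedAddCommGroup V] [NormedSpace 𝕜 V]

theorem fderiv_apply_eq_deriv_add_smul {F : E → V} {y : E} (hF : DifferentiableAt 𝕜 F y)
    (b : E) : fderiv 𝕜 F y b = deriv (fun t : 𝕜 => F (y + t • b)) 0 := by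
  have hline : HasDerivAt (fun t : 𝕜 => y + t • b) b 0 := by
    simpa using ((hasDerivAt_id (0 : 𝕜)).smul_const b).const_add y
  have hF' : HasFDerivAt F (fderiv 𝕜 F y) (y + (0 : 𝕜) • b) := by
    simpa using hF.hasFDerivAt
  exact (hF'.comp_hasDerivAt 0 hline).deriv.symm

theorem differentiableAt_comp_add_smul {F : E → V} {y b : E} {t : 𝕜}
    (hF : DifferentiableAt 𝕜 F (y + t • b)) :
    DifferentiableAt 𝕜 (fun s : 𝕜 => F (y + s • b)) t :=
  hF.comp t ((differentiableAt_id.smul_const b).const_add y)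

end LineRestriction

section HolomorphicRegularity

variable {E V : Type*} [NormedAddCommGroup E] [NormedSpace ℂ E]
  [NormedAddCommGroup V] [NormedSpace ℂ V]

theorem norm_fderiv_le_of_forall_mem_closedBall_norm_le {F : E → V} {y : E} {r M : ℝ}
    (hr : 0 < r) (hF : ∀ x ∈ closedBall y r, DifferentiableAt ℂ F x)
    (hM : ∀ x ∈ closedBall y r, ‖F x‖ ≤ M) : ‖fderiv ℂ F y‖ ≤ M / r := by
  have hM0 : 0 ≤ M := (norm_nonneg _).trans (hM y (mem_closedBall_self hr.le))
  refine ContinuousLinearMap.opNorm_le_of_unit_norm (by positivity) fun b hb => ?_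
  have hmem : ∀ t : ℂ, ‖t‖ ≤ r → y + t • b ∈ closedBall y r := fun t ht => by
    simpa [norm_smul, hb] using ht
  rw [fderiv_apply_eq_deriv_add_smul (hF y (mem_closedBall_self hr.le))]
  refine norm_deriv_le_of_forall_mem_sphere_norm_le hr (DifferentiableOn.diffContOnCl ?_)
    fun t ht => hM _ (hmem t (by simpa using ht.le))
  rw [closure_ball _ hr.ne']
  exact fun t ht => (differentiableAt_comp_add_smul
    (hF _ (hmem t (by simpa using ht)))).differentiableWithinAt

theorem DifferentiableOn.exists_closedBall_norm_fderiv_le {F : E → V} {U : Set E}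
    (hF : DifferentiableOn ℂ F U) (hU : IsOpen U) {z : E} (hz : z ∈ U) :
    ∃ r > 0, ∃ C, closedBall z r ⊆ U ∧ ∀ x ∈ closedBall z r, ‖fderiv ℂ F x‖ ≤ C := by
  have hnear : ∀ᶠ x in 𝓝 z, x ∈ U ∧ ‖F x‖ < ‖F z‖ + 1 :=
    (hU.eventually_mem hz).and ((hF.continuousOn.continuousAt (hU.mem_nhds hz)).norm.eventually
      (gt_mem_nhds (lt_add_one _)))
  obtain ⟨ε, hε, hball⟩ := nhds_basis_closedBall.eventually_iff.1 hnear
  refine ⟨ε / 2, by positivity, (‖F z‖ + 1) / (ε / 2),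
    (closedBall_subset_closedBall (by linarith)).trans fun x hx => (hball hx).1, fun x hx => ?_⟩
  have hsub : closedBall x (ε / 2) ⊆ closedBall z ε :=
    closedBall_subset_closedBall' (by rw [mem_closedBall] at hx; linarith)
  exact norm_fderiv_le_of_forall_mem_closedBall_norm_le (by positivity)
    (fun y hy => hF.differentiableAt (hU.mem_nhds (hball (hsub hy)).1))
    fun y hy => (hball (hsub hy)).2.le

variable [CompleteSpace V]

theorem fderiv_apply_eq_circleIntegral {F : E → V} {y b : E} {r : ℝ} (hr : 0 < r)
    (hF : ∀ t : ℂ, ‖t‖ ≤ r → DifferentiableAt ℂ F (y + t • b)) :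
    fderiv ℂ F y b = (2 * π * I)⁻¹ • ∮ t in C(0, r), (1 / t ^ 2) • F (y + t • b) := by
  have hslice : DifferentiableOn ℂ (fun t : ℂ => F (y + t • b)) (closedBall 0 r) :=
    fun t ht => (differentiableAt_comp_add_smul
      (hF t (by simpa using ht))).differentiableWithinAt
  have := hslice.deriv_eq_smul_circleIntegral hr
  simp only [sub_zero] at this
  rw [this, smul_smul, inv_mul_cancel₀ two_pi_I_ne_zero, one_smul,
    fderiv_apply_eq_deriv_add_smul (by simpa using hF 0 (by simp [hr.le]))]

variable [FiniteDimensional ℂ E] [SecondCountableTopology V]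

theorem hasFDerivAt_intervalIntegral_smul_comp_add {F : E → V} {K : ℝ → ℂ} {γ : ℝ → E}
    (hK : Continuous K) (hγ : Continuous γ) {z : E} {s : Set E} (hs : s ∈ 𝓝 z) {C : ℝ}
    (hF : ∀ x ∈ s, ∀ θ, DifferentiableAt ℂ F (x + γ θ))
    (hC : ∀ x ∈ s, ∀ θ, ‖fderiv ℂ F (x + γ θ)‖ ≤ C) (a b : ℝ) :
    HasFDerivAt (fun x => ∫ θ in a..b, K θ • F (x + γ θ))
      (∫ θ in a..b, K θ • fderiv ℂ F (z + γ θ)) z := by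
  borelize E
  have hcont : ∀ x ∈ s, Continuous fun θ => K θ • F (x + γ θ) := fun x hx =>
    hK.smul (continuous_iff_continuousAt.2 fun θ =>
      (hF x hx θ).continuousAt.comp (f := fun θ => x + γ θ) (continuous_const.add hγ).continuousAt)
  refine intervalIntegral.hasFDerivAt_integral_of_dominated_of_fderiv_le
    (bound := fun θ => ‖K θ‖ * C) hs
    (eventually_of_mem hs fun x hx => (hcont x hx).aestronglyMeasurable)
    ((hcont z (mem_of_mem_nhds hs)).intervalIntegrable a b)
    (hK.aestronglyMeasurable.smul ((measurable_fderiv ℂ F).comp (f := fun θ => z + γ θ)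
      (continuous_const.add hγ).measurable).aestronglyMeasurable)
    (ae_of_all _ fun θ _ x hx => (norm_smul_le _ _).trans
      (mul_le_mul_of_nonneg_left (hC x hx θ) (norm_nonneg _)))
    ((hK.norm.mul continuous_const).intervalIntegrable a b)
    (ae_of_all _ fun θ _ x hx => ?_)
  exact ((hF x hx θ).hasFDerivAt.comp x ((hasFDerivAt_id x).add_const (γ θ))).const_smul (K θ)

theorem DifferentiableOn.differentiableAt_fderiv_apply {F : E → V} {U : Set E}
    (hF : DifferentiableOn ℂ F U) (hU : IsOpen U) {z : E} (hz : z ∈ U) (a : E) :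
    DifferentiableAt ℂ (fun x => fderiv ℂ F x a) z := by
  obtain ⟨r, hr, C, hU', hC⟩ := hF.exists_closedBall_norm_fderiv_le hU hz
  set ρ := r / (2 * (‖a‖ + 1)) with hρ_def
  have hρ : 0 < ρ := by positivity
  have hmem : ∀ x ∈ ball z (r / 2), ∀ t : ℂ, ‖t‖ ≤ ρ → x + t • a ∈ closedBall z r := by
    intro x hx t ht
    have hρa : ρ * ‖a‖ ≤ r / 2 := by
      rw [hρ_def, div_mul_eq_mul_div, div_le_div_iff₀ (by positivity) two_pos]
      nlinarith [norm_nonneg a]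
    rw [mem_closedBall, dist_eq_norm, add_sub_right_comm]
    calc ‖x - z + t • a‖ ≤ ‖x - z‖ + ‖t‖ * ‖a‖ := (norm_add_le _ _).trans_eq (by rw [norm_smul])
      _ ≤ r / 2 + ρ * ‖a‖ := add_le_add (mem_ball_iff_norm.1 hx).le
          (mul_le_mul_of_nonneg_right ht (norm_nonneg a))
      _ ≤ r := by linarith
  have hdiff : ∀ y ∈ closedBall z r, DifferentiableAt ℂ F y := fun y hy =>
    hF.differentiableAt (hU.mem_nhds (hU' hy))
  set K : ℝ → ℂ := fun θ => circleMap 0 ρ θ * I * (1 / circleMap 0 ρ θ ^ 2)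
  have hK : Continuous K :=
    ((continuous_circleMap 0 ρ).mul continuous_const).mul (continuous_const.div
      ((continuous_circleMap 0 ρ).pow 2) fun θ => pow_ne_zero 2 (circleMap_ne_center hρ.ne'))
  have hrep : (fun x => fderiv ℂ F x a) =ᶠ[𝓝 z]
      fun x => (2 * π * I)⁻¹ • ∫ θ in (0 : ℝ)..2 * π, K θ • F (x + circleMap 0 ρ θ • a) := by
    filter_upwards [ball_mem_nhds z (half_pos hr)] with x hx
    rw [fderiv_apply_eq_circleIntegral hρ fun t ht => hdiff _ (hmem x hx t ht)]
    simp only [circleIntegral, deriv_circleMap, smul_smul, K]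
  have hcircle : ∀ θ, ‖circleMap 0 ρ θ‖ ≤ ρ := fun θ => by simp [abs_of_pos hρ]
  have hint := hasFDerivAt_intervalIntegral_smul_comp_add hK
    ((continuous_circleMap 0 ρ).smul continuous_const) (ball_mem_nhds z (half_pos hr))
    (fun x hx θ => hdiff _ (hmem x hx _ (hcircle θ)))
    (fun x hx θ => hC _ (hmem x hx _ (hcircle θ))) 0 (2 * π)
  exact (hint.const_smul _).differentiableAt.congr_of_eventuallyEq hrep

theorem DifferentiableOn.differentiableAt_fderiv {F : E → V} {U : Set E}
    (hF : DifferentiableOn ℂ F U) (hU : IsOpen U) {z : E} (hz : z ∈ U) :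
    DifferentiableAt ℂ (fderiv ℂ F) z :=
  differentiableAt_clm_of_forall_apply (hF.differentiableAt_fderiv_apply hU hz)

end HolomorphicRegularity

theorem eq_zero_of_symm_of_antisymm {α R : Type*} [AddGroup R] [IsAddTorsionFree R]
    {S : α → α → α → R} (hsymm : ∀ a b c, S a b c = S b a c)
    (hanti : ∀ a b c, S a b c = -S a c b) (a b c : α) : S a b c = 0 := by
  refine self_eq_neg.1 ?_
  calc S a b c = -S a c b := hanti a b c
    _ = -S c a b := by rw [hsymm]
    _ = S c b a := by rw [hanti c a b, neg_neg]
    _ = S b c a := hsymm c b a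
    _ = -S b a c := hanti b c a
    _ = -S a b c := by rw [hsymm]

section Conformal

variable {𝕜 E ι : Type*} [NontriviallyNormedField 𝕜] [NormedAddCommGroup E] [NormedSpace 𝕜 E]
  [Fintype ι]

theorem HasFDerivAt.apply_apply {G : E → E →L[𝕜] (ι → 𝕜)} {G' : E →L[𝕜] E →L[𝕜] (ι → 𝕜)}
    {z : E} (hG : HasFDerivAt G G' z) (a : E) (i : ι) :
    HasFDerivAt (fun x => G x a i)
      ((ContinuousLinearMap.proj i).comp ((ContinuousLinearMap.apply 𝕜 _ a).comp G')) z :=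
  (ContinuousLinearMap.proj (R := 𝕜) (φ := fun _ : ι => 𝕜) i).hasFDerivAt.comp z
    ((ContinuousLinearMap.apply 𝕜 (ι → 𝕜) a).hasFDerivAt.comp z hG)

theorem dotProduct_fderiv_apply_antisymm {G : E → E →L[𝕜] (ι → 𝕜)}
    {G' : E →L[𝕜] E →L[𝕜] (ι → 𝕜)} {z : E} (hG : HasFDerivAt G G' z)
    (hconf : ∀ᶠ x in 𝓝 z, ∀ v w, G x v ⬝ᵥ G x w = 0) (a b c : E) :
    G' a b ⬝ᵥ G z c = -(G' a c ⬝ᵥ G z b) := by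
  have hprod := HasFDerivAt.fun_sum (u := Finset.univ) (A := fun i x => G x b i * G x c i)
    fun i _ => (hG.apply_apply b i).mul (hG.apply_apply c i)
  have hzero : HasFDerivAt (fun x => ∑ i, G x b i * G x c i) 0 z :=
    (hasFDerivAt_const (𝕜 := 𝕜) (0 : 𝕜) z).congr_of_eventuallyEq (hconf.mono fun x hx => hx b c)
  have h := congrArg (· a) (hprod.unique hzero)
  simp only [sum_apply, add_apply, smul_apply, ContinuousLinearMap.comp_apply,
    ContinuousLinearMap.proj_apply, ContinuousLinearMap.apply_apply, zero_apply,
    smul_eq_mul] at h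
  rw [eq_neg_iff_add_eq_zero, dotProduct, dotProduct, ← Finset.sum_add_distrib, ← h]
  exact Finset.sum_congr rfl fun i _ => by ring

end Conformal

theorem dotProduct_fderiv_fderiv_fderiv_eq_zero {𝕜 E ι : Type*} [RCLike 𝕜] [NormedAddCommGroup E]
    [NormedSpace 𝕜 E] [Fintype ι] {F : E → ι → 𝕜} {z : E}
    (hF : ∀ᶠ x in 𝓝 z, DifferentiableAt 𝕜 F x) (hF' : DifferentiableAt 𝕜 (fderiv 𝕜 F) z)
    (hconf : ∀ᶠ x in 𝓝 z, ∀ v w, fderiv 𝕜 F x v ⬝ᵥ fderiv 𝕜 F x w = 0) (a b c : E) :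
    fderiv 𝕜 (fderiv 𝕜 F) z a b ⬝ᵥ fderiv 𝕜 F z c = 0 :=
  eq_zero_of_symm_of_antisymm (S := fun a b c => fderiv 𝕜 (fderiv 𝕜 F) z a b ⬝ᵥ fderiv 𝕜 F z c)
    (fun a b c => by
      rw [second_derivative_symmetric_of_eventually (hF.mono fun x hx => hx.hasFDerivAt)
        hF'.hasFDerivAt a b])
    (dotProduct_fderiv_apply_antisymm hF'.hasFDerivAt hconf) a b c

section FundamentalForm

variable {ι : Type*} [Fintype ι]

/-- `fundamentalPairing p q = ⟪Re (I • p), Re q⟫`, so that `α z v w` is the pairing of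
`DF z v` and `DF z w`. -/
def fundamentalPairing (p q : ι → ℂ) : ℝ := ∑ i, -(p i).im * (q i).re

theorem fundamentalPairing_add_swap (p q : ι → ℂ) :
    fundamentalPairing p q + fundamentalPairing q p = -(p ⬝ᵥ q).im := by
  simp only [fundamentalPairing, dotProduct, im_sum, ← Finset.sum_add_distrib,
    ← Finset.sum_neg_distrib, mul_im]
  exact Finset.sum_congr rfl fun i _ => by ring

variable {E : Type*} [NormedAddCommGroup E] [NormedSpace ℂ E]

theorem fderiv_fundamentalPairing_apply {G : E → E →L[ℂ] (ι → ℂ)}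
    {G' : E →L[ℂ] E →L[ℂ] (ι → ℂ)} {z : E} (hG : HasFDerivAt G G' z) (a b c : E) :
    fderiv ℝ (fun x => fundamentalPairing (G x a) (G x b)) z c =
      fundamentalPairing (G' c a) (G z b) + fundamentalPairing (G z a) (G' c b) := by
  have hsum : HasFDerivAt (fun x => fundamentalPairing (G x a) (G x b)) _ z :=
    HasFDerivAt.fun_sum (A := fun i x => -(G x a i).im * (G x b i).re) fun i _ =>
      (imCLM.hasFDerivAt.comp z ((hG.apply_apply a i).restrictScalars ℝ)).neg.mul
        (reCLM.hasFDerivAt.comp z ((hG.apply_apply b i).restrictScalars ℝ))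
  rw [hsum.fderiv]
  simp only [Pi.neg_apply, Function.comp_apply, imCLM_apply, neg_smul, smul_neg, sum_apply,
    add_apply, neg_apply, smul_apply, ContinuousLinearMap.comp_apply,
    ContinuousLinearMap.coe_restrictScalars', ContinuousLinearMap.apply_apply,
    ContinuousLinearMap.proj_apply, reCLM_apply, smul_eq_mul, fundamentalPairing,
    ← Finset.sum_add_distrib]
  exact Finset.sum_congr rfl fun i _ => by ring

end FundamentalForm

/-- For a holomorphic `F : U → ℂⁿ` satisfying the conformality condition, the
fundamental 2-form `α(z)(v,w) = ⟨df(z)(i·v), df(z)(w)⟩` of the pullback metric of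
`f = Re ∘ F` is closed: the cyclic sum of its directional derivatives vanishes. -/
theorem fundamental_two_form_closed
    (m n : ℕ) (U : Set (Fin m → ℂ)) (hU : IsOpen U)
    (F : (Fin m → ℂ) → (Fin n → ℂ)) (hF : DifferentiableOn ℂ F U)
    (hconf : ∀ z ∈ U, ∀ v w : Fin m → ℂ,
      ∑ i, fderiv ℂ F z v i * fderiv ℂ F z w i = 0)
    (df : (Fin m → ℂ) → (Fin m → ℂ) → EuclideanSpace ℝ (Fin n))
    (hdf : ∀ z v, df z v = fun i => (fderiv ℂ F z v i).re)
    (α : (Fin m → ℂ) → (Fin m → ℂ) → (Fin m → ℂ) → ℝ)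
    (hα : ∀ z v w, α z v w =
      @inner ℝ (EuclideanSpace ℝ (Fin n)) _ (df z (Complex.I • v)) (df z w)) :
    ∀ z ∈ U, ∀ u v w : Fin m → ℂ,
      fderiv ℝ (fun z' => α z' v w) z u +
        fderiv ℝ (fun z' => α z' w u) z v +
        fderiv ℝ (fun z' => α z' u v) z w = 0 := by
  intro z hz u v w
  have hdiff : ∀ᶠ x in 𝓝 z, DifferentiableAt ℂ F x :=
    (hU.eventually_mem hz).mono fun x hx => hF.differentiableAt (hU.mem_nhds hx)
  have hF2 : DifferentiableAt ℂ (fderiv ℂ F) z := hF.differentiableAt_fderiv hU hz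
  have hsymm := second_derivative_symmetric_of_eventually
    (hdiff.mono fun x hx => hx.hasFDerivAt) hF2.hasFDerivAt
  have hpair : ∀ a b c, fundamentalPairing (fderiv ℂ (fderiv ℂ F) z a b) (fderiv ℂ F z c) +
      fundamentalPairing (fderiv ℂ F z c) (fderiv ℂ (fderiv ℂ F) z a b) = 0 := fun a b c => by
    rw [fundamentalPairing_add_swap, dotProduct_fderiv_fderiv_fderiv_eq_zero hdiff hF2
      ((hU.eventually_mem hz).mono hconf) a b c, zero_im, neg_zero]
  have hα' : ∀ a b, (fun z' => α z' a b) =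
      fun z' => fundamentalPairing (fderiv ℂ F z' a) (fderiv ℂ F z' b) := fun a b => by
    funext z'
    simp [hα, PiLp.inner_apply, hdf, fundamentalPairing, mul_comm]
  simp only [hα', fderiv_fundamentalPairing_apply hF2.hasFDerivAt]
  rw [hsymm v u, hsymm w v, hsymm u w]
  linarith [hpair u v w, hpair v w u, hpair w u v]
end

section
/- Let f, g : ℂ → ℂ be complex differentiable (entire) functions, and define P₂, P₄, P₆ : ℂ² → ℂ by P₂(x,y) = -(g'(x) + f'(y))/2, P₄(x,y) = f(y) - y·(g'(x) + f'(y))/2, P₆(x,y) = g(x) - x·(g'(x) + f'(y))/2. Then (P₂, P₄, P₆) solves the system: for all (x,y) ∈ ℂ², (i) y·∂ₓP₂(x,y) = ∂ₓP₄(x,y); (ii) x·∂_yP₂(x,y) = ∂_yP₆(x,y); (iii) y·∂_yP₂(x,y) + x·∂ₓP₂(x,y) = ∂_yP₄(x,y) + ∂ₓP₆(x,y). -/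
/-!
Along a coordinate slice, `P₂ = -s/2` with `s = g'(x) + f'(y)`, and `P₄`, `P₆` are `F - t·s/2`
or `C - c·s/2`. Equations (i) and (ii) are linearity of the derivative; (iii) follows from the
product rule for `t·s(t)`, after which the first-order terms `f'(y) + g'(x) - s` cancel.
-/

section SliceDerivatives

variable {𝕜 : Type*} [NontriviallyNormedField 𝕜]

theorem deriv_const_sub_const_mul_div_two (C c : 𝕜) (s : 𝕜 → 𝕜) (t : 𝕜) :
    deriv (fun t => C - c * s t / 2) t = c * deriv (fun t => -s t / 2) t := by
  simp only [deriv_const_sub, deriv_div_const, deriv_const_mul_field', deriv.fun_neg]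
  ring

theorem deriv_sub_id_mul_div_two {F s : 𝕜 → 𝕜} {t : 𝕜} (hF : DifferentiableAt 𝕜 F t)
    (hs : DifferentiableAt 𝕜 s t) :
    deriv (fun t => F t - t * s t / 2) t =
      deriv F t - s t / 2 + t * deriv (fun t => -s t / 2) t := by
  rw [deriv_fun_sub hF (by fun_prop), deriv_div_const, deriv_fun_mul differentiableAt_fun_id hs]
  simp only [deriv_div_const, deriv.fun_neg, deriv_id'']
  ring

end SliceDerivatives

/-- For arbitrary entire functions `f, g : ℂ → ℂ`, the triple
`P₂ = -(g'(x)+f'(y))/2`, `P₄ = f(y) - y(g'(x)+f'(y))/2`, `P₆ = g(x) - x(g'(x)+f'(y))/2`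
solves the system (i) `y ∂ₓP₂ = ∂ₓP₄`, (ii) `x ∂_yP₂ = ∂_yP₆`,
(iii) `y ∂_yP₂ + x ∂ₓP₂ = ∂_yP₄ + ∂ₓP₆`. -/
theorem furuhata_family_solves_system
    (f g : ℂ → ℂ) (hf : Differentiable ℂ f) (hg : Differentiable ℂ g)
    (P₂ P₄ P₆ : ℂ × ℂ → ℂ)
    (hP₂ : ∀ x y : ℂ, P₂ (x, y) = -(deriv g x + deriv f y) / 2)
    (hP₄ : ∀ x y : ℂ, P₄ (x, y) = f y - y * (deriv g x + deriv f y) / 2)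
    (hP₆ : ∀ x y : ℂ, P₆ (x, y) = g x - x * (deriv g x + deriv f y) / 2) :
    ∀ x y : ℂ,
      y * deriv (fun t => P₂ (t, y)) x = deriv (fun t => P₄ (t, y)) x ∧
      x * deriv (fun t => P₂ (x, t)) y = deriv (fun t => P₆ (x, t)) y ∧
      y * deriv (fun t => P₂ (x, t)) y + x * deriv (fun t => P₂ (t, y)) x =
        deriv (fun t => P₄ (x, t)) y + deriv (fun t => P₆ (t, y)) x := by
  intro x y
  simp only [hP₂, hP₄, hP₆]
  refine ⟨(deriv_const_sub_const_mul_div_two _ _ _ _).symm,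
    (deriv_const_sub_const_mul_div_two _ _ _ _).symm, ?_⟩
  rw [deriv_sub_id_mul_div_two (hf y) ((hf.deriv y).const_add _),
    deriv_sub_id_mul_div_two (hg x) ((hg.deriv x).add_const _)]
  ring
end

section
/- Let P₂, P₄, P₆ : ℂ² → ℂ be complex differentiable (holomorphic) functions satisfying for all (x,y) ∈ ℂ²: (i) y·∂ₓP₂(x,y) = ∂ₓP₄(x,y); (ii) x·∂_yP₂(x,y) = ∂_yP₆(x,y); (iii) y·∂_yP₂(x,y) + x·∂ₓP₂(x,y) = ∂_yP₄(x,y) + ∂ₓP₆(x,y). Then there exist complex differentiable (entire) functions f, g : ℂ → ℂ such that for all (x,y) ∈ ℂ²: P₂(x,y) = -(g'(x) + f'(y))/2, P₄(x,y) = f(y) - y·(g'(x) + f'(y))/2, and P₆(x,y) = g(x) - x·(g'(x) + f'(y))/2. -/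
/-!
Condition (i) says that `P₄ - y P₂` has vanishing `x`-derivative, so it is a function `f y`
of `y` alone; symmetrically (ii) makes `P₆ - x P₂` a function `g x` of `x` alone.
Differentiating these identities gives `f'(y) = ∂_y P₄ - P₂ - y ∂_y P₂` and
`g'(x) = ∂ₓ P₆ - P₂ - x ∂ₓ P₂`, and (iii) says exactly that their sum is `-2 P₂`.
-/

section Slices

variable {𝕜 E F G : Type*} [NontriviallyNormedField 𝕜]
  [NormedAddCommGroup E] [NormedSpace 𝕜 E] [NormedAddCommGroup F] [NormedSpace 𝕜 F]
  [NormedAddCommGroup G] [NormedSpace 𝕜 G] {P : E × F → G}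

theorem Differentiable.comp_prodMk_const (hP : Differentiable 𝕜 P) (y : F) :
    Differentiable 𝕜 fun t => P (t, y) :=
  hP.comp (differentiable_id.prodMk (differentiable_const y))

theorem Differentiable.comp_const_prodMk (hP : Differentiable 𝕜 P) (x : E) :
    Differentiable 𝕜 fun t => P (x, t) :=
  hP.comp ((differentiable_const x).prodMk differentiable_id)

end Slices

section Classification

variable {𝕜 : Type*} [RCLike 𝕜]

theorem sub_const_mul_eq_of_const_mul_deriv_eq {u v : 𝕜 → 𝕜} (hu : Differentiable 𝕜 u)
    (hv : Differentiable 𝕜 v) (c : 𝕜) (h : ∀ t, c * deriv u t = deriv v t) (a b : 𝕜) :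
    v a - c * u a = v b - c * u b := by
  refine is_const_of_deriv_eq_zero (f := fun t => v t - c * u t) (hv.fun_sub (hu.const_mul c))
    (fun t => ?_) a b
  rw [deriv_fun_sub (hv t) ((hu.const_mul c) t), deriv_const_mul c (hu t), h, sub_self]

theorem deriv_sub_id_mul {u v : 𝕜 → 𝕜} {y : 𝕜} (hu : DifferentiableAt 𝕜 u y)
    (hv : DifferentiableAt 𝕜 v y) :
    deriv (fun t => v t - t * u t) y = deriv v y - u y - y * deriv u y := by
  rw [(hv.hasDerivAt.fun_sub ((hasDerivAt_id' y).fun_mul hu.hasDerivAt)).deriv]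
  ring

theorem exists_eq_add_mul_of_mul_deriv_fst_eq {Q R : 𝕜 × 𝕜 → 𝕜} (hQ : Differentiable 𝕜 Q)
    (hR : Differentiable 𝕜 R)
    (h : ∀ x y, y * deriv (fun t => Q (t, y)) x = deriv (fun t => R (t, y)) x) :
    ∃ f : 𝕜 → 𝕜, Differentiable 𝕜 f ∧ ∀ x y, R (x, y) = f y + y * Q (x, y) ∧
      deriv f y = deriv (fun t => R (x, t)) y - Q (x, y) - y * deriv (fun t => Q (x, t)) y := by
  have hf : ∀ x, (fun y => R (0, y) - y * Q (0, y)) = fun y => R (x, y) - y * Q (x, y) :=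
    fun x => funext fun y => sub_const_mul_eq_of_const_mul_deriv_eq
      (hQ.comp_prodMk_const y) (hR.comp_prodMk_const y) y (h · y) 0 x
  refine ⟨fun y => R (0, y) - y * Q (0, y),
    (hR.comp_const_prodMk 0).sub (differentiable_id.mul (hQ.comp_const_prodMk 0)),
    fun x y => ⟨?_, ?_⟩⟩
  · rw [hf x]
    ring
  · rw [hf x]
    exact deriv_sub_id_mul (hQ.comp_const_prodMk x y) (hR.comp_const_prodMk x y)

end Classification

/-- Classification of the holomorphic solutions of the system arising from the
quadratic relation with `P₁ = xy`, `P₃ = x`, `P₅ = y`: every holomorphic solution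
`(P₂, P₄, P₆)` on `ℂ²` comes from a pair of entire functions `f, g` via
`P₂ = -(g'(x)+f'(y))/2`, `P₄ = f(y) - y(g'(x)+f'(y))/2`,
`P₆ = g(x) - x(g'(x)+f'(y))/2`. -/
theorem solutions_of_system_classification
    (P₂ P₄ P₆ : ℂ × ℂ → ℂ)
    (hP₂ : Differentiable ℂ P₂) (hP₄ : Differentiable ℂ P₄) (hP₆ : Differentiable ℂ P₆)
    (h₁ : ∀ x y : ℂ, y * deriv (fun t => P₂ (t, y)) x = deriv (fun t => P₄ (t, y)) x)
    (h₂ : ∀ x y : ℂ, x * deriv (fun t => P₂ (x, t)) y = deriv (fun t => P₆ (x, t)) y)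
    (h₃ : ∀ x y : ℂ,
      y * deriv (fun t => P₂ (x, t)) y + x * deriv (fun t => P₂ (t, y)) x =
        deriv (fun t => P₄ (x, t)) y + deriv (fun t => P₆ (t, y)) x) :
    ∃ f g : ℂ → ℂ, Differentiable ℂ f ∧ Differentiable ℂ g ∧
      ∀ x y : ℂ,
        P₂ (x, y) = -(deriv g x + deriv f y) / 2 ∧
        P₄ (x, y) = f y - y * (deriv g x + deriv f y) / 2 ∧
        P₆ (x, y) = g x - x * (deriv g x + deriv f y) / 2 := by
  obtain ⟨f, hf, hP₄f⟩ := exists_eq_add_mul_of_mul_deriv_fst_eq hP₂ hP₄ h₁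
  obtain ⟨g, hg, hP₆g⟩ := exists_eq_add_mul_of_mul_deriv_fst_eq
    (Q := fun p => P₂ (p.2, p.1)) (R := fun p => P₆ (p.2, p.1)) (by fun_prop) (by fun_prop)
    fun x y => h₂ y x
  refine ⟨f, g, hf, hg, fun x y => ?_⟩
  obtain ⟨hP₄xy, hf'⟩ := hP₄f x y
  obtain ⟨hP₆xy, hg'⟩ := hP₆g y x
  have hsum : deriv g x + deriv f y = -2 * P₂ (x, y) := by
    rw [hf', hg']
    linear_combination -(h₃ x y)
  rw [hsum]
  exact ⟨by ring, by linear_combination hP₄xy, by linear_combination hP₆xy⟩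
end

section
/- Let f, g : ℂ → ℂ be complex differentiable (entire) functions. Define holomorphic functions on ℂ²: P₁(x,y) = x·y, P₂(x,y) = -(g'(x) + f'(y))/2, P₃(x,y) = x, P₄(x,y) = f(y) - y·(g'(x) + f'(y))/2, P₅(x,y) = y, P₆(x,y) = g(x) - x·(g'(x) + f'(y))/2, and let Φ : ℂ² → ℝ⁶ be Φ = (Re(P₁+P₂), Im(P₁-P₂), Re(P₃-P₄), Im(P₃+P₄), Re(P₅-P₆), Im(P₅+P₆)). Then Φ is an immersion whose pullback of the Euclidean metric is invariant under the complex structure: for every z ∈ ℂ², the real differential DΦ(z) : ℂ² ≅ ℝ⁴ → ℝ⁶ is injective, and ⟨DΦ(z)(i·v), DΦ(z)(i·w)⟩ = ⟨DΦ(z)(v), DΦ(z)(w)⟩ for all v, w ∈ ℂ². -/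
/-!
For holomorphic `P : E → ℂ⁶`, the real differential of
`Φ = (Re(P₁+P₂), Im(P₁-P₂), Re(P₃-P₄), Im(P₃+P₄), Re(P₅-P₆), Im(P₅+P₆))` is the same real-linear
map applied to `dP`, and the identity `Re(a+b) Re(c+d) + Im(a-b) Im(c-d) = Re(a c̄ + b d̄) + Re(a d + b c)`
splits `⟨dΦ v, dΦ w⟩` into the hermitian part `Re ∑ dPₖ(v) conj dPₖ(w)`, which is invariant under
`i`, and the real part of the polarized quadric `dP₁ ⊙ dP₂ - dP₃ ⊙ dP₄ - dP₅ ⊙ dP₆`, which changes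
sign under `i`. When `dP` is null for that quadric the metric is therefore hermitian, and
`‖dΦ v‖² = ∑ |dPₖ v|²`, so `dΦ` is injective as soon as `dP` is. For Furuhata's family
`dP₃ = dx` and `dP₅ = dy`, and the null relation holds because the coefficient `s` of `P₂ = -s` is the
mean of `g'(x)` and `f'(y)`.
-/

open Complex ComplexConjugate ContinuousLinearMap

noncomputable def weierstrassCoords : (Fin 6 → ℂ) →L[ℝ] EuclideanSpace ℝ (Fin 6) :=
  LinearMap.toContinuousLinearMap
    { toFun p := WithLp.toLp 2 ![(p 0 + p 1).re, (p 0 - p 1).im, (p 2 - p 3).re,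
        (p 2 + p 3).im, (p 4 - p 5).re, (p 4 + p 5).im]
      map_add' p q := by ext i; fin_cases i <;> simp <;> ring
      map_smul' c p := by ext i; fin_cases i <;> simp <;> ring }

theorem weierstrassCoords_apply (p : Fin 6 → ℂ) :
    weierstrassCoords p = WithLp.toLp 2 ![(p 0 + p 1).re, (p 0 - p 1).im, (p 2 - p 3).re,
        (p 2 + p 3).im, (p 4 - p 5).re, (p 4 + p 5).im] := rfl

/-- The paper's relation `dP₁ ⊙ dP₂ = dP₃ ⊙ dP₄ + dP₅ ⊙ dP₆` says
`weierstrassForm (dP v) (dP w) = 0`. -/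
def weierstrassForm (p q : Fin 6 → ℂ) : ℂ :=
  p 0 * q 1 + p 1 * q 0 - (p 2 * q 3 + p 3 * q 2) - (p 4 * q 5 + p 5 * q 4)

theorem inner_weierstrassCoords (p q : Fin 6 → ℂ) :
    inner ℝ (weierstrassCoords p) (weierstrassCoords q) =
      (∑ k, p k * conj (q k)).re + (weierstrassForm p q).re := by
  simp only [weierstrassCoords_apply, weierstrassForm, PiLp.inner_apply, RCLike.inner_apply,
    Real.ringHom_apply, Fin.sum_univ_six, Matrix.cons_val_zero, Matrix.cons_val_one,
    Matrix.cons_val, add_re, add_im, sub_re, sub_im, mul_re, conj_re, conj_im]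
  ring

theorem weierstrassForm_I_smul (p q : Fin 6 → ℂ) :
    weierstrassForm (I • p) (I • q) = -weierstrassForm p q := by
  simp only [weierstrassForm, Pi.smul_apply, smul_eq_mul]
  ring_nf
  rw [I_sq]
  ring

theorem inner_weierstrassCoords_I_smul {p q : Fin 6 → ℂ} (h : weierstrassForm p q = 0) :
    inner ℝ (weierstrassCoords (I • p)) (weierstrassCoords (I • q)) =
      inner ℝ (weierstrassCoords p) (weierstrassCoords q) := by
  have hermitian : ∀ k, (I • p) k * conj ((I • q) k) = p k * conj (q k) := fun k => by
    simp only [Pi.smul_apply, smul_eq_mul, map_mul, conj_I]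
    linear_combination -(p k * conj (q k)) * I_sq
  simp only [inner_weierstrassCoords, hermitian, weierstrassForm_I_smul, h, neg_zero]

theorem eq_zero_of_weierstrassCoords_eq_zero {p : Fin 6 → ℂ} (hp : weierstrassForm p p = 0)
    (h : weierstrassCoords p = 0) : p = 0 := by
  have hsum : ∑ k, normSq (p k) = 0 := by
    simpa [h, hp, mul_conj] using (inner_weierstrassCoords p p).symm
  have hzero := (Fintype.sum_eq_zero_iff_of_nonneg fun k => normSq_nonneg (p k)).mp hsum
  exact funext fun k => normSq_eq_zero.mp (congr_fun hzero k)

def IsHermitianImmersionAt {E F : Type*} [NormedAddCommGroup E] [NormedSpace ℂ E]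
    [NormedAddCommGroup F] [InnerProductSpace ℝ F] (Φ : E → F) (z : E) : Prop :=
  Function.Injective (fderiv ℝ Φ z) ∧
    ∀ v w : E, inner ℝ (fderiv ℝ Φ z (I • v)) (fderiv ℝ Φ z (I • w)) =
      inner ℝ (fderiv ℝ Φ z v) (fderiv ℝ Φ z w)

theorem HasFDerivAt.isHermitianImmersionAt_weierstrassCoords_comp {E : Type*}
    [NormedAddCommGroup E] [NormedSpace ℂ E] {P : E → Fin 6 → ℂ} {D : E →L[ℂ] (Fin 6 → ℂ)}
    {z : E} (hP : HasFDerivAt P D z) (hD : Function.Injective D)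
    (hnull : ∀ v w, weierstrassForm (D v) (D w) = 0) :
    IsHermitianImmersionAt (fun x => weierstrassCoords (P x)) z := by
  have hΦ : HasFDerivAt (fun x => weierstrassCoords (P x))
      (weierstrassCoords.comp (D.restrictScalars ℝ)) z :=
    weierstrassCoords.hasFDerivAt.comp z (hP.restrictScalars ℝ)
  rw [IsHermitianImmersionAt, hΦ.fderiv]
  refine ⟨(injective_iff_map_eq_zero _).mpr fun v hv => hD ?_, fun v w => ?_⟩
  · rw [map_zero]
    exact eq_zero_of_weierstrassCoords_eq_zero (hnull v v) hv
  · simp only [coe_comp, Function.comp_apply, coe_restrictScalars', map_smul D]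
    exact inner_weierstrassCoords_I_smul (hnull v w)

namespace Furuhata

variable {f g : ℂ → ℂ}

noncomputable def meanDeriv (f g : ℂ → ℂ) (p : ℂ × ℂ) : ℂ := (deriv g p.1 + deriv f p.2) / 2

noncomputable def nullMap (f g : ℂ → ℂ) (p : ℂ × ℂ) : Fin 6 → ℂ :=
  ![p.1 * p.2, -meanDeriv f g p, p.1, f p.2 - p.2 * meanDeriv f g p, p.2,
    g p.1 - p.1 * meanDeriv f g p]

/-- The derivative of `meanDeriv f g` enters only through `σ`, which cancels from the null
relation. -/
noncomputable def nullMapDeriv (f g : ℂ → ℂ) (z : ℂ × ℂ) : ℂ × ℂ →L[ℂ] (Fin 6 → ℂ) :=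
  let σ := fderiv ℂ (meanDeriv f g) z
  let s := meanDeriv f g z
  pi ![z.1 • snd ℂ ℂ ℂ + z.2 • fst ℂ ℂ ℂ, -σ, fst ℂ ℂ ℂ,
    deriv f z.2 • snd ℂ ℂ ℂ - (z.2 • σ + s • snd ℂ ℂ ℂ), snd ℂ ℂ ℂ,
    deriv g z.1 • fst ℂ ℂ ℂ - (z.1 • σ + s • fst ℂ ℂ ℂ)]

theorem hasFDerivAt_nullMap (hf : Differentiable ℂ f) (hg : Differentiable ℂ g) (z : ℂ × ℂ) :
    HasFDerivAt (nullMap f g) (nullMapDeriv f g z) z := by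
  have hs : HasFDerivAt (meanDeriv f g) (fderiv ℂ (meanDeriv f g) z) z :=
    (show DifferentiableAt ℂ (meanDeriv f g) z by unfold meanDeriv; fun_prop).hasFDerivAt
  have h₁ : HasFDerivAt (fun p : ℂ × ℂ => p.1) (fst ℂ ℂ ℂ) z := hasFDerivAt_fst
  have h₂ : HasFDerivAt (fun p : ℂ × ℂ => p.2) (snd ℂ ℂ ℂ) z := hasFDerivAt_snd
  refine hasFDerivAt_pi.2 fun i => ?_
  fin_cases i
  · exact h₁.mul h₂
  · exact hs.neg
  · exact h₁
  · exact ((hf z.2).hasDerivAt.comp_hasFDerivAt z h₂).sub (h₂.mul hs)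
  · exact h₂
  · exact ((hg z.1).hasDerivAt.comp_hasFDerivAt z h₁).sub (h₁.mul hs)

theorem weierstrassForm_nullMapDeriv (z v w : ℂ × ℂ) :
    weierstrassForm (nullMapDeriv f g z v) (nullMapDeriv f g z w) = 0 := by
  simp only [weierstrassForm, nullMapDeriv, meanDeriv, coe_pi', Matrix.cons_val_zero,
    Matrix.cons_val_one, Matrix.cons_val, add_apply, sub_apply, neg_apply, smul_apply, coe_fst',
    coe_snd', smul_eq_mul]
  ring

theorem nullMapDeriv_injective (z : ℂ × ℂ) : Function.Injective (nullMapDeriv f g z) := by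
  refine (injective_iff_map_eq_zero _).mpr fun v hv => ?_
  have hv₁ := congr_fun hv 2
  have hv₂ := congr_fun hv 4
  simp only [nullMapDeriv, coe_pi', Matrix.cons_val, coe_fst', coe_snd', Pi.zero_apply]
    at hv₁ hv₂
  exact Prod.ext hv₁ hv₂

end Furuhata

/-- The family of pluriminimal maps `Φ : ℂ² → ℝ⁶` built from entire `f, g` via the
Weierstrass formula (generalizing Furuhata's example) is an immersion whose pullback
of the euclidean metric is invariant under multiplication by `i`. -/
theorem furuhata_family_is_pluriminimal_immersion
    (f g : ℂ → ℂ) (hf : Differentiable ℂ f) (hg : Differentiable ℂ g)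
    (Φ : ℂ × ℂ → EuclideanSpace ℝ (Fin 6))
    (hΦ : ∀ x y : ℂ, Φ (x, y) =
      ![(x * y + (-(deriv g x + deriv f y) / 2)).re,
        (x * y - (-(deriv g x + deriv f y) / 2)).im,
        (x - (f y - y * (deriv g x + deriv f y) / 2)).re,
        (x + (f y - y * (deriv g x + deriv f y) / 2)).im,
        (y - (g x - x * (deriv g x + deriv f y) / 2)).re,
        (y + (g x - x * (deriv g x + deriv f y) / 2)).im]) :
    ∀ z : ℂ × ℂ,
      Function.Injective (fderiv ℝ Φ z) ∧
      ∀ v w : ℂ × ℂ,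
        @inner ℝ (EuclideanSpace ℝ (Fin 6)) _
            (fderiv ℝ Φ z (Complex.I • v)) (fderiv ℝ Φ z (Complex.I • w)) =
          @inner ℝ (EuclideanSpace ℝ (Fin 6)) _ (fderiv ℝ Φ z v) (fderiv ℝ Φ z w) := by
  have hΦ_eq : Φ = fun p => weierstrassCoords (Furuhata.nullMap f g p) := by
    funext ⟨x, y⟩
    ext i
    fin_cases i <;>
      simp [hΦ, weierstrassCoords_apply, Furuhata.nullMap, Furuhata.meanDeriv] <;> ring
  intro z
  rw [hΦ_eq]
  exact (Furuhata.hasFDerivAt_nullMap hf hg z).isHermitianImmersionAt_weierstrassCoords_comp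
    (Furuhata.nullMapDeriv_injective z) (Furuhata.weierstrassForm_nullMapDeriv z)
end
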